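/- arXiv:1808.03085 — 6 statements merged into one kernel-verified Lean document; each statement's English description precedes it below -/
import Mathlib

section
/- Let f : 2^X → ℝ≥0 be monotone submodular and c additive with strictly positive element costs. For each T ⊆ X and each y with 1 ≤ y ≤ |T|, let T_y be a subset of T of size y maximizing f(T_y)/c(T_y). Then f(T)/c(T) ≤ f(T_y)/c(T_y). -/
/-- Telescoping submodularity: the sum of last-element marginals is at most `f S - f ∅`. -/
lemma sum_marginals_le {α : Type*} [DecidableEq α] (f : Finset α → ℝ)
    (hsub : ∀ (A B : Finset α) (x : α), A ⊆ B → x ∉ B →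
      f (B ∪ {x}) - f B ≤ f (A ∪ {x}) - f A) :
    ∀ S : Finset α, ∑ x ∈ S, (f S - f (S.erase x)) ≤ f S - f ∅ := by
  intro S
  induction S using Finset.induction_on with
  | empty => simp
  | @insert a S ha ih =>
    rw [Finset.sum_insert ha]
    have h1 : ∀ x ∈ S, f (insert a S) - f ((insert a S).erase x)
        ≤ f S - f (S.erase x) := by
      intro x hx
      have hxa : x ≠ a := fun h => ha (h ▸ hx)
      have herase : (insert a S).erase x = insert a (S.erase x) := by
        rw [Finset.erase_insert_of_ne hxa.symm]
      have hnotin : x ∉ insert a (S.erase x) := by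
        simp [hxa, Finset.notMem_erase]
      have := hsub (S.erase x) (insert a (S.erase x)) x
        (Finset.subset_insert _ _) hnotin
      have e1 : insert a (S.erase x) ∪ {x} = insert a S := by
        ext z; by_cases hz : z = x <;> simp [hz, Finset.mem_erase, hx]
      have e2 : S.erase x ∪ {x} = S := by
        ext z; by_cases hz : z = x <;> simp [hz, hx]
      rw [e1, e2] at this
      rw [herase]
      linarith [this]
    have h2 : ∑ x ∈ S, (f (insert a S) - f ((insert a S).erase x))
        ≤ ∑ x ∈ S, (f S - f (S.erase x)) := Finset.sum_le_sum h1
    have h3 : (insert a S).erase a = S := Finset.erase_insert ha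
    rw [h3]
    linarith

/-- There is an element whose removal doesn't decrease the ratio. -/
lemma exists_good_erase {α : Type*} [DecidableEq α] (f : Finset α → ℝ) (c : α → ℝ)
    (hnonneg : ∀ A, 0 ≤ f A)
    (hsub : ∀ (A B : Finset α) (x : α), A ⊆ B → x ∉ B →
      f (B ∪ {x}) - f B ≤ f (A ∪ {x}) - f A)
    (hc : ∀ x, 0 < c x)
    (S : Finset α) (hS : S.Nonempty) :
    ∃ x ∈ S, f S * (∑ z ∈ S.erase x, c z) ≤ f (S.erase x) * (∑ z ∈ S, c z) := by
  by_contra h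
  push_neg at h
  have hcS : 0 < ∑ z ∈ S, c z := Finset.sum_pos (fun z _ => hc z) hS
  have key : ∀ x ∈ S, f S * c x < (f S - f (S.erase x)) * (∑ z ∈ S, c z) := by
    intro x hx
    have hx' := h x hx
    have hsplit : ∑ z ∈ S, c z = c x + ∑ z ∈ S.erase x, c z :=
      (Finset.add_sum_erase S c hx).symm
    have hs2 : ∑ z ∈ S.erase x, c z = (∑ z ∈ S, c z) - c x := by linarith
    rw [hs2] at hx'
    nlinarith [hx']
  have hsum : f S * (∑ z ∈ S, c z) < (∑ x ∈ S, (f S - f (S.erase x))) * (∑ z ∈ S, c z) := by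
    rw [Finset.mul_sum, Finset.sum_mul]
    exact Finset.sum_lt_sum_of_nonempty hS key
  have htel := sum_marginals_le f hsub S
  have hfe := hnonneg (∅ : Finset α)
  nlinarith

/-- If `T_y` is a size-`y` subset of `T` maximizing the ratio `f/c` among
size-`y` subsets of `T`, then `f(T)/c(T) ≤ f(T_y)/c(T_y)`. -/
theorem stmt2 {α : Type*} [DecidableEq α] (f : Finset α → ℝ) (c : α → ℝ)
    (hnonneg : ∀ A, 0 ≤ f A)
    (hmono : ∀ A B : Finset α, A ⊆ B → f A ≤ f B)
    (hsub : ∀ (A B : Finset α) (x : α), A ⊆ B → x ∉ B →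
      f (B ∪ {x}) - f B ≤ f (A ∪ {x}) - f A)
    (hc : ∀ x, 0 < c x)
    (T : Finset α) (y : ℕ) (hy1 : 1 ≤ y) (hy2 : y ≤ T.card)
    (Ty : Finset α) (hTyT : Ty ⊆ T) (hTycard : Ty.card = y)
    (hTymax : ∀ S ⊆ T, S.card = y →
      f S / (∑ x ∈ S, c x) ≤ f Ty / (∑ x ∈ Ty, c x)) :
    f T / (∑ x ∈ T, c x) ≤ f Ty / (∑ x ∈ Ty, c x) := by
  have key : ∀ n : ℕ, ∀ S ⊆ T, S.card = y + n →
      f S / (∑ x ∈ S, c x) ≤ f Ty / (∑ x ∈ Ty, c x) := by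
    intro n
    induction n with
    | zero => intro S hST hcard; exact hTymax S hST (by simpa using hcard)
    | succ n ih =>
      intro S hST hcard
      have hSne : S.Nonempty := Finset.card_pos.mp (by omega)
      obtain ⟨x, hx, hgood⟩ := exists_good_erase f c hnonneg hsub hc S hSne
      have hcard' : (S.erase x).card = y + n := by
        rw [Finset.card_erase_of_mem hx]; omega
      have hne' : (S.erase x).Nonempty := by
        rw [← Finset.card_pos, hcard']; omega
      have h1 : f S / (∑ z ∈ S, c z) ≤ f (S.erase x) / (∑ z ∈ S.erase x, c z) := by
        rw [div_le_div_iff₀ (Finset.sum_pos (fun z _ => hc z) hSne)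
          (Finset.sum_pos (fun z _ => hc z) hne')]
        exact hgood
      exact h1.trans (ih (S.erase x) ((Finset.erase_subset _ _).trans hST) hcard')
  exact key (T.card - y) T Finset.Subset.rfl (by omega)
end

section
/- The cost function c of the GBSM problem is not submodular: there exists an instance with two bins and three elements such that for S = {x_1} ⊆ T = {x_1, x_2} and x_3 ∉ T, c(S ∪ {x_3}) − c(S) < c(T ∪ {x_3}) − c(T). -/
/-!
In the two-bin instance with opening costs `1` and association costs `(1, 1, M)` for the first
bin and `(1 - ε, M, ε)` for the second, `x₃` is cheap only in the second bin. Next to `x₁` alone,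
the second bin already serves `x₁` best, so `x₃` costs just `ε`. Once `x₂` is present, which only
the first bin serves cheaply, `x₃` forces opening the second bin as well, and its marginal cost
jumps to `1`.
-/

open Finset

/-- The paper's `c(Y)` for two bins: a minimum over the three nonempty sets of open bins. -/
def twoBinCost {α : Type*} (binCost : Fin 2 → ℝ) (assoc : Fin 2 → α → ℝ) (Y : Finset α) : ℝ :=
  min (min (binCost 0 + ∑ x ∈ Y, assoc 0 x) (binCost 1 + ∑ x ∈ Y, assoc 1 x))
    (binCost 0 + binCost 1 + ∑ x ∈ Y, min (assoc 0 x) (assoc 1 x))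

namespace NonSubmodularInstance

def binCost : Fin 2 → ℝ := fun _ => 1

def assoc (ε M : ℝ) : Fin 2 → Fin 3 → ℝ := ![![1, 1, M], ![1 - ε, M, ε]]

variable {ε M : ℝ}

theorem cost_x₁ (hε : 0 ≤ ε) : twoBinCost binCost (assoc ε M) {0} = 2 - ε := by
  simp only [twoBinCost, binCost, assoc, sum_singleton]
  norm_num [min_def, Matrix.cons_val_two]
  split_ifs <;> linarith

theorem cost_x₁_x₃ (hε : 0 ≤ ε) (hε₁ : ε ≤ 1) (hM : 2 ≤ M) :
    twoBinCost binCost (assoc ε M) {0, 2} = 2 := by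
  simp only [twoBinCost, binCost, assoc, sum_pair (show (0 : Fin 3) ≠ 2 by decide)]
  norm_num [min_def, Matrix.cons_val_two]
  split_ifs <;> linarith

theorem cost_x₁_x₂ (hε₁ : ε ≤ 1) (hM : 2 ≤ M) :
    twoBinCost binCost (assoc ε M) {0, 1} = 3 := by
  simp only [twoBinCost, binCost, assoc, sum_pair (show (0 : Fin 3) ≠ 1 by decide)]
  norm_num [min_def, Matrix.cons_val_two]
  split_ifs <;> linarith

theorem cost_x₁_x₂_x₃ (hε : 0 ≤ ε) (hε₁ : ε ≤ 1) (hM : 2 ≤ M) :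
    twoBinCost binCost (assoc ε M) {0, 1, 2} = 4 := by
  simp only [twoBinCost, binCost, assoc, show ({0, 1, 2} : Finset (Fin 3)) = univ by decide,
    Fin.sum_univ_three]
  norm_num [min_def, Matrix.cons_val_two]
  split_ifs <;> linarith

theorem marginal_x₃_lt (hε : 0 ≤ ε) (hε₁ : ε < 1) (hM : 2 ≤ M) :
    twoBinCost binCost (assoc ε M) {0, 2} - twoBinCost binCost (assoc ε M) {0} <
      twoBinCost binCost (assoc ε M) {0, 1, 2} - twoBinCost binCost (assoc ε M) {0, 1} := by
  rw [cost_x₁ hε, cost_x₁_x₃ hε hε₁.le hM, cost_x₁_x₂ hε₁.le hM, cost_x₁_x₂_x₃ hε hε₁.le hM]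
  linarith

end NonSubmodularInstance

/-- The GBSM cost function is not submodular: there is an instance with two
bins and three elements where, for `S = {x₁} ⊆ T = {x₁,x₂}` and `x₃ ∉ T`,
`c(S ∪ {x₃}) − c(S) < c(T ∪ {x₃}) − c(T)`. -/
theorem stmt8 :
    ∃ (binCost : Fin 2 → ℝ) (assoc : Fin 2 → Fin 3 → ℝ),
      let cost : Finset (Fin 3) → ℝ := fun Y =>
        min (min (binCost 0 + ∑ x ∈ Y, assoc 0 x)
                 (binCost 1 + ∑ x ∈ Y, assoc 1 x))
            (binCost 0 + binCost 1 + ∑ x ∈ Y, min (assoc 0 x) (assoc 1 x))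
      cost ({0, 2} : Finset (Fin 3)) - cost ({0} : Finset (Fin 3)) <
        cost ({0, 1, 2} : Finset (Fin 3)) - cost ({0, 1} : Finset (Fin 3)) :=
  ⟨_, _, NonSubmodularInstance.marginal_x₃_lt (ε := 1 / 2) (M := 10)
    (by norm_num) (by norm_num) (by norm_num)⟩
end

section
/- Under the hypotheses of the induction lemma, if additionally ∑_{j=1}^{l+1} c_j > k (the greedy solution at step l+1 exceeds budget k) and α ∈ (0,1], then f(X'_{l+1}) ≥ (1 − 1/e^α)·OPT. -/
/-!
Write `g i = OPT - f (X' i)` for the gap left after step `i`. The step hypothesis says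
`g i ≤ (1 - x i) g (i-1)` with `x i = c i a / k`, and `1 - x ≤ e^{-x}` turns the product of these
factors into `e^{-(a/k) ∑ c_j}`, which is at most `e^{-a}` once `∑ c_j > k`.
-/

open Finset Real

theorem Finset.sum_Icc_one_eq_sum_range_succ {M : Type*} [AddCommMonoid M] (u : ℕ → M) (n : ℕ) :
    ∑ j ∈ Icc 1 n, u j = ∑ i ∈ range n, u (i + 1) := by
  rw [range_eq_Ico, sum_Ico_add', ← Ico_add_one_right_eq_Icc, zero_add]

/-- Monotonicity of the gap handles the steps at which it is already negative, where the
factor `1 - x n` could flip its sign. -/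
theorem le_mul_exp_neg_sum_of_le_one_sub_mul {g x : ℕ → ℝ} {N : ℕ} (h0 : 0 ≤ g 0)
    (hanti : ∀ n < N, g (n + 1) ≤ g n) (hstep : ∀ n < N, g (n + 1) ≤ (1 - x n) * g n) :
    ∀ n ≤ N, g n ≤ g 0 * exp (-∑ i ∈ range n, x i) := by
  intro n hn
  induction n with
  | zero => simp
  | succ n ih =>
    have ih := ih (by omega)
    rw [sum_range_succ, neg_add, exp_add]
    rcases lt_or_ge (g n) 0 with hneg | hnonneg
    · calc g (n + 1) ≤ g n := hanti n hn
        _ ≤ 0 := hneg.le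
        _ ≤ _ := by positivity
    · calc g (n + 1) ≤ (1 - x n) * g n := hstep n hn
        _ ≤ exp (-x n) * g n := by
          gcongr
          linarith [add_one_le_exp (-x n)]
        _ ≤ exp (-x n) * (g 0 * exp (-∑ i ∈ range n, x i)) := by gcongr
        _ = _ := by ring

theorem stmt10_general {α : Type*} (f : Finset α → ℝ)
    (hmono : ∀ A B : Finset α, A ⊆ B → f A ≤ f B)
    (hempty : f ∅ = 0)
    (Xstar : Finset α) (OPT : ℝ) (hOPT : f Xstar = OPT)
    (l : ℕ) (X' : ℕ → Finset α) (hX0 : X' 0 = ∅)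
    (hchain : ∀ i, i ≤ l → X' i ⊆ X' (i + 1))
    (c : ℕ → ℝ)
    (a k : ℝ) (ha0 : 0 < a) (hk : 0 < k)
    (hstep : ∀ i, 1 ≤ i → i ≤ l + 1 →
      f (X' i) - f (X' (i - 1)) ≥ (c i * a / k) * (OPT - f (X' (i - 1))))
    (hbudget : ∑ j ∈ Finset.Icc 1 (l + 1), c j > k) :
    f (X' (l + 1)) ≥ (1 - 1 / Real.exp a) * OPT := by
  have hOPT0 : 0 ≤ OPT := hOPT ▸ hempty ▸ hmono ∅ Xstar (empty_subset _)
  have hgap := le_mul_exp_neg_sum_of_le_one_sub_mul (g := fun n ↦ OPT - f (X' n))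
    (x := fun n ↦ c (n + 1) * a / k) (N := l + 1) (by simp [hX0, hempty, hOPT0])
    (fun n hn ↦ by linarith [hmono _ _ (hchain n (by omega))])
    (fun n hn ↦ by linarith [Nat.add_sub_cancel n 1 ▸ hstep (n + 1) (by omega) hn]) (l + 1) le_rfl
  have hsum : ∑ i ∈ range (l + 1), c (i + 1) * a / k = a / k * ∑ j ∈ Icc 1 (l + 1), c j := by
    rw [sum_Icc_one_eq_sum_range_succ, mul_sum]
    exact sum_congr rfl fun i _ ↦ by ring
  have hexp : exp (-(a / k * ∑ j ∈ Icc 1 (l + 1), c j)) ≤ exp (-a) := by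
    rw [exp_le_exp, neg_le_neg_iff, div_mul_eq_mul_div, le_div_iff₀ hk]
    exact mul_le_mul_of_nonneg_left hbudget.le ha0.le
  simp only [hsum, hX0, hempty, sub_zero] at hgap
  calc (1 - 1 / exp a) * OPT = OPT - OPT * exp (-a) := by rw [exp_neg]; ring
    _ ≤ OPT - OPT * exp (-(a / k * ∑ j ∈ Icc 1 (l + 1), c j)) := by gcongr
    _ ≤ f (X' (l + 1)) := by linarith

/-- If additionally the greedy solution at step `l+1` exceeds the budget
(`∑ c_j > k`), then `f(X'_{l+1}) ≥ (1 − 1/e^α)·OPT`. -/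
theorem stmt10 {α : Type*} [DecidableEq α] (f : Finset α → ℝ)
    (hnonneg : ∀ A, 0 ≤ f A)
    (hmono : ∀ A B : Finset α, A ⊆ B → f A ≤ f B)
    (hempty : f ∅ = 0)
    (Xstar : Finset α) (OPT : ℝ) (hOPT : f Xstar = OPT)
    (l : ℕ) (X' : ℕ → Finset α) (hX0 : X' 0 = ∅)
    (hchain : ∀ i, i ≤ l → X' i ⊆ X' (i + 1))
    (c : ℕ → ℝ) (hcpos : ∀ i, 1 ≤ i → i ≤ l + 1 → 0 < c i)
    (a k : ℝ) (ha0 : 0 < a) (ha1 : a ≤ 1) (hk : 0 < k)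
    (hstep : ∀ i, 1 ≤ i → i ≤ l + 1 →
      f (X' i) - f (X' (i - 1)) ≥ (c i * a / k) * (OPT - f (X' (i - 1))))
    (hbudget : ∑ j ∈ Finset.Icc 1 (l + 1), c j > k) :
    f (X' (l + 1)) ≥ (1 - 1 / Real.exp a) * OPT :=
  stmt10_general f hmono hempty Xstar OPT hOPT l X' hX0 hchain c a k ha0 hk hstep hbudget
end

section
/- Under the hypotheses of the induction lemma with budget βk in place of k (i.e., ∑_{j=1}^{l+1} c_j > βk and f(X'_i) − f(X'_{i−1}) ≥ (c_i α/k)(OPT − f(X'_{i−1}))), for α ∈ (0,1] and β ≥ 1 we have f(X'_{l+1}) ≥ (1 − 1/e^{αβ})·OPT. -/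
/-!
The gap `g_i = OPT − f(X'_i)` satisfies `g_i ≤ (1 − c_i α/k) g_{i−1} ≤ e^{−c_i α/k} g_{i−1}` while it is
nonnegative, and once it turns negative it stays so by monotonicity. Hence
`g_{l+1} ≤ e^{−(α/k) ∑ c_j} OPT ≤ e^{−αβ} OPT`, the last step because the budget is exceeded.
-/

open Finset Real

theorem le_exp_neg_sum_mul_of_le_one_sub_mul {g t : ℕ → ℝ} {G : ℝ} {N : ℕ}
    (hG : 0 ≤ G) (h0 : g 0 ≤ G)
    (hanti : ∀ n < N, g (n + 1) ≤ g n)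
    (hstep : ∀ n < N, g (n + 1) ≤ (1 - t (n + 1)) * g n) :
    ∀ n ≤ N, g n ≤ exp (-∑ i ∈ Icc 1 n, t i) * G := by
  intro n hn
  induction n with
  | zero => simpa using h0
  | succ n ih =>
    have hnN : n < N := hn
    by_cases hg : 0 ≤ g n
    · calc g (n + 1) ≤ (1 - t (n + 1)) * g n := hstep n hnN
        _ ≤ exp (-t (n + 1)) * g n := by gcongr; exact one_sub_le_exp_neg _
        _ ≤ exp (-t (n + 1)) * (exp (-∑ i ∈ Icc 1 n, t i) * G) := by gcongr; exact ih hnN.le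
        _ = exp (-∑ i ∈ Icc 1 (n + 1), t i) * G := by
          rw [sum_Icc_succ_top (by omega), ← mul_assoc, ← exp_add]
          ring_nf
    · calc g (n + 1) ≤ g n := hanti n hnN
        _ ≤ 0 := by linarith
        _ ≤ _ := by positivity

theorem stmt12_general {α : Type*} (f : Finset α → ℝ)
    (hmono : ∀ A B : Finset α, A ⊆ B → f A ≤ f B)
    (hempty : f ∅ = 0)
    (Xstar : Finset α) (OPT : ℝ) (hOPT : f Xstar = OPT)
    (l : ℕ) (X' : ℕ → Finset α) (hX0 : X' 0 = ∅)
    (hchain : ∀ i, i ≤ l → X' i ⊆ X' (i + 1))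
    (c : ℕ → ℝ)
    (a k β : ℝ) (ha0 : 0 < a) (hk : 0 < k)
    (hstep : ∀ i, 1 ≤ i → i ≤ l + 1 →
      f (X' i) - f (X' (i - 1)) ≥ (c i * a / k) * (OPT - f (X' (i - 1))))
    (hbudget : ∑ j ∈ Finset.Icc 1 (l + 1), c j > β * k) :
    f (X' (l + 1)) ≥ (1 - 1 / Real.exp (a * β)) * OPT := by
  have hOPT0 : 0 ≤ OPT := hOPT ▸ hempty ▸ hmono ∅ Xstar (empty_subset _)
  have hgap : OPT - f (X' (l + 1)) ≤ exp (-∑ i ∈ Icc 1 (l + 1), c i * a / k) * OPT :=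
    le_exp_neg_sum_mul_of_le_one_sub_mul (g := fun n => OPT - f (X' n)) hOPT0
      (by simp [hX0, hempty])
      (fun n hn => by linarith [hmono _ _ (hchain n (by omega))])
      (fun n hn => by
        have h := hstep (n + 1) (by omega) hn
        rw [Nat.add_sub_cancel] at h
        linarith)
      (l + 1) le_rfl
  have hrate : a * β ≤ ∑ i ∈ Icc 1 (l + 1), c i * a / k := by
    rw [← sum_div, ← sum_mul, le_div_iff₀ hk]
    nlinarith
  have hdecay : exp (-∑ i ∈ Icc 1 (l + 1), c i * a / k) * OPT ≤ exp (-(a * β)) * OPT := by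
    gcongr
  rw [one_div, ← exp_neg]
  linarith

/-- Bi-criterion version: if the greedy solution exceeds budget `βk`
(`∑ c_j > βk`), then `f(X'_{l+1}) ≥ (1 − 1/e^{αβ})·OPT`. -/
theorem stmt12 {α : Type*} [DecidableEq α] (f : Finset α → ℝ)
    (hnonneg : ∀ A, 0 ≤ f A)
    (hmono : ∀ A B : Finset α, A ⊆ B → f A ≤ f B)
    (hempty : f ∅ = 0)
    (Xstar : Finset α) (OPT : ℝ) (hOPT : f Xstar = OPT)
    (l : ℕ) (X' : ℕ → Finset α) (hX0 : X' 0 = ∅)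
    (hchain : ∀ i, i ≤ l → X' i ⊆ X' (i + 1))
    (c : ℕ → ℝ) (hcpos : ∀ i, 1 ≤ i → i ≤ l + 1 → 0 < c i)
    (a k β : ℝ) (ha0 : 0 < a) (ha1 : a ≤ 1) (hk : 0 < k) (hβ : 1 ≤ β)
    (hstep : ∀ i, 1 ≤ i → i ≤ l + 1 →
      f (X' i) - f (X' (i - 1)) ≥ (c i * a / k) * (OPT - f (X' (i - 1))))
    (hbudget : ∑ j ∈ Finset.Icc 1 (l + 1), c j > β * k) :
    f (X' (l + 1)) ≥ (1 - 1 / Real.exp (a * β)) * OPT :=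
  stmt12_general f hmono hempty Xstar OPT hOPT l X' hX0 hchain c a k β ha0 hk hstep hbudget
end

section
/- Let g : 2^X → ℝ≥0 be monotone with g(∅)=0, let B_0 < B_1 < … < B_{q+1} be positive budgets with B_{i} = (1+ε)B_{i−1} for 1 ≤ i ≤ q, B_{q+1} = k ≤ (1+ε)B_q, and B_0 ≤ c* where c* is the cost of a set X̄* with c* ≤ k. Suppose for each i a set T_i is produced with cost(T_i) ≤ B_i and g(T_i) ≥ (1 − 1/e)·max{g(Y) : cost(Y) ≤ B_i}. If T_j maximizes g(T_i)/B_i over all i, then g(T_j)/cost(T_j) ≥ (1 − 1/e)(1 − ε)·g(X̄*)/c*. -/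
/-- The exponential-budget list is a `(1 − 1/e)(1 − ε)`-list: the element `T_j`
maximizing `g(T_i)/B_i` approximates the optimal ratio `g(X̄*)/c*`. -/
theorem stmt14 {α : Type*} [DecidableEq α]
    (g : Finset α → ℝ) (cost : Finset α → ℝ)
    (hgnonneg : ∀ A, 0 ≤ g A)
    (hgmono : ∀ A B : Finset α, A ⊆ B → g A ≤ g B)
    (hgempty : g ∅ = 0)
    (hcostnn : ∀ A, 0 ≤ cost A)
    (ε k : ℝ) (hε0 : 0 < ε) (hε1 : ε < 1)
    (q : ℕ) (B : ℕ → ℝ)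
    (hBpos : ∀ i ≤ q + 1, 0 < B i)
    (hBmono : ∀ i j, i ≤ j → j ≤ q + 1 → B i ≤ B j)
    (hBgeo : ∀ i, 1 ≤ i → i ≤ q → B i = (1 + ε) * B (i - 1))
    (hBlast : B (q + 1) = k) (hk : k ≤ (1 + ε) * B q)
    (Xbar : Finset α) (cstar : ℝ) (hcstar : cost Xbar = cstar)
    (hB0 : B 0 ≤ cstar) (hck : cstar ≤ k)
    (T : ℕ → Finset α)
    (hTcost : ∀ i ≤ q + 1, cost (T i) ≤ B i)
    (hToracle : ∀ i ≤ q + 1, ∀ Y : Finset α, cost Y ≤ B i →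
      g (T i) ≥ (1 - 1 / Real.exp 1) * g Y)
    (j : ℕ) (hj : j ≤ q + 1)
    (hjmax : ∀ i ≤ q + 1, g (T i) / B i ≤ g (T j) / B j)
    (hTjpos : 0 < cost (T j)) :
    g (T j) / cost (T j) ≥ (1 - 1 / Real.exp 1) * (1 - ε) * (g Xbar / cstar) := by
  classical
  have hcpos : 0 < cstar := lt_of_lt_of_le (hBpos 0 (Nat.zero_le _)) hB0
  have hex : ∃ i, cstar ≤ B i := ⟨q + 1, hBlast ▸ hck⟩
  set l := Nat.find hex with hl
  have hlle : l ≤ q + 1 := Nat.find_le (hBlast ▸ hck)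
  have hlB : cstar ≤ B l := Nat.find_spec hex
  -- B l ≤ (1+ε) * cstar
  have hBl_ub : B l ≤ (1 + ε) * cstar := by
    rcases Nat.eq_zero_or_pos l with h0 | hpos
    · rw [h0]
      nlinarith [hB0]
    · have hlt : B (l - 1) < cstar := by
        have := Nat.find_min hex (m := l - 1) (by omega)
        linarith [lt_of_not_ge this]
      rcases Nat.lt_or_ge l (q + 1) with hlq | hlq
      · have hle : l ≤ q := by omega
        rw [hBgeo l hpos hle]
        nlinarith
      · have hleq : l = q + 1 := le_antisymm hlle hlq
        have hq1 : (q + 1 : ℕ) - 1 = q := by omega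
        rw [hleq, hBlast]
        have : B q < cstar := by rwa [hleq, hq1] at hlt
        nlinarith
  have hBjpos : 0 < B j := hBpos j hj
  have hBlpos : 0 < B l := hBpos l hlle
  have hcj : cost (T j) ≤ B j := hTcost j hj
  have hgj : 0 ≤ g (T j) := hgnonneg _
  have he1 : (0:ℝ) ≤ 1 - 1 / Real.exp 1 := by
    have : (1:ℝ) ≤ Real.exp 1 := Real.one_le_exp (by norm_num)
    have h2 : 1 / Real.exp 1 ≤ 1 := by
      rw [div_le_one (by positivity)]; exact this
    linarith
  -- step 1: g(Tj)/cost(Tj) ≥ g(Tj)/Bj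
  have s1 : g (T j) / B j ≤ g (T j) / cost (T j) :=
    div_le_div_of_nonneg_left hgj hTjpos hcj
  -- step 2: g(Tj)/Bj ≥ g(Tl)/Bl
  have s2 : g (T l) / B l ≤ g (T j) / B j := hjmax l hlle
  -- step 3: g(Tl) ≥ (1-1/e) g(Xbar)
  have s3 : g (T l) ≥ (1 - 1 / Real.exp 1) * g Xbar :=
    hToracle l hlle Xbar (by rw [hcstar]; exact hlB)
  have hgX : 0 ≤ g Xbar := hgnonneg _
  -- step 4: (1-1/e) g(Xbar) / Bl ≥ (1-1/e)(1-ε) g(Xbar)/cstar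
  have s4 : (1 - 1 / Real.exp 1) * (1 - ε) * (g Xbar / cstar)
      ≤ (1 - 1 / Real.exp 1) * g Xbar / B l := by
    have key : (1 - ε) * B l ≤ cstar := by nlinarith
    rw [show (1 - 1/Real.exp 1) * (1-ε) * (g Xbar / cstar)
        = ((1 - 1/Real.exp 1)*(1-ε)*g Xbar)/cstar from by ring,
      div_le_div_iff₀ hcpos hBlpos]
    nlinarith [mul_le_mul_of_nonneg_left key (mul_nonneg he1 hgX)]
  have s5 : (1 - 1 / Real.exp 1) * g Xbar / B l ≤ g (T l) / B l := by
    gcongr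
  calc (1 - 1 / Real.exp 1) * (1 - ε) * (g Xbar / cstar)
      ≤ (1 - 1 / Real.exp 1) * g Xbar / B l := s4
    _ ≤ g (T l) / B l := s5
    _ ≤ g (T j) / B j := s2
    _ ≤ g (T j) / cost (T j) := s1
end

section
/- Let f : 2^X → ℝ≥0 be monotone submodular with f(∅) = 0, and let c be additive with positive element costs satisfying the condition that every set T of size exactly ⌈1/ε⌉ has c(T) ≥ (1/ε)·c₀ for a fixed bin cost c₀ ≥ 0, where ε ∈ (0,1). Then for every T* ⊆ X with |T*| > 1/ε there exists T ⊆ T* with |T| ≤ ⌈1/ε⌉ such that f(T)/(c₀' + c(T)) ≥ (1−ε)·f(T*)/(c₀' + c(T*)) for any 0 ≤ c₀' ≤ c₀. -/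
section aux
variable {α : Type*} [DecidableEq α]

lemma key_sub (f : Finset α → ℝ)
    (hsub : ∀ (A B : Finset α) (x : α), A ⊆ B → x ∉ B →
      f (B ∪ {x}) - f B ≤ f (A ∪ {x}) - f A)
    (S : Finset α) : ∑ x ∈ S, (f S - f (S.erase x)) ≤ f S - f ∅ := by
  induction S using Finset.induction_on with
  | empty => simp
  | @insert a S' ha ih =>
    rw [Finset.sum_insert ha]
    have h1 : (insert a S').erase a = S' := Finset.erase_insert ha
    have h2 : ∑ x ∈ S', (f (insert a S') - f ((insert a S').erase x)) ≤ f S' - f ∅ := by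
      refine le_trans (Finset.sum_le_sum ?_) ih
      intro x hx
      have hxa : x ≠ a := by rintro rfl; exact ha hx
      have hrw : (insert a S').erase x = insert a (S'.erase x) :=
        Finset.erase_insert_of_ne hxa.symm
      have := hsub (S'.erase x) S' a (Finset.erase_subset x S') ha
      have e : ∀ s : Finset α, s ∪ {a} = insert a s := fun s => by ext y; simp [or_comm]
      rw [e, e] at this
      rw [hrw]; linarith
    rw [h1]; linarith

lemma exists_erase (f : Finset α → ℝ) (c : α → ℝ)
    (hsub : ∀ (A B : Finset α) (x : α), A ⊆ B → x ∉ B →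
      f (B ∪ {x}) - f B ≤ f (A ∪ {x}) - f A)
    (hempty : f ∅ = 0) (hcpos : ∀ x, 0 < c x)
    (S : Finset α) (h2 : 2 ≤ S.card) :
    ∃ x ∈ S, f S * ∑ y ∈ S.erase x, c y ≤ f (S.erase x) * ∑ y ∈ S, c y := by
  by_contra hcon
  push_neg at hcon
  have hne : S.Nonempty := Finset.card_pos.mp (by omega)
  have hsum := Finset.sum_lt_sum_of_nonempty hne hcon
  have cSpos : 0 < ∑ y ∈ S, c y := Finset.sum_pos (fun y _ => hcpos y) hne
  have hc_erase : ∀ x ∈ S, ∑ y ∈ S.erase x, c y = (∑ y ∈ S, c y) - c x := by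
    intro x hx; exact Finset.sum_erase_eq_sub hx
  have hR : ∑ x ∈ S, f S * ∑ y ∈ S.erase x, c y
      = f S * ((S.card : ℝ) * (∑ y ∈ S, c y) - ∑ y ∈ S, c y) := by
    rw [← Finset.mul_sum]
    congr 1
    rw [Finset.sum_congr rfl hc_erase, Finset.sum_sub_distrib, Finset.sum_const,
      nsmul_eq_mul]
  have hkey := key_sub f hsub S
  rw [hempty, sub_zero, Finset.sum_sub_distrib, Finset.sum_const, nsmul_eq_mul] at hkey
  -- hkey : S.card * f S - ∑ f (S.erase x) ≤ f S
  have hL : (∑ y ∈ S, c y) * ((S.card : ℝ) * f S - f S)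
      ≤ ∑ x ∈ S, f (S.erase x) * ∑ y ∈ S, c y := by
    rw [← Finset.sum_mul]
    have : (S.card : ℝ) * f S - f S ≤ ∑ x ∈ S, f (S.erase x) := by linarith
    nlinarith [cSpos]
  rw [hR] at hsum
  nlinarith [hsum, hL]

lemma descent (f : Finset α → ℝ) (c : α → ℝ)
    (hnonneg : ∀ A, 0 ≤ f A)
    (hsub : ∀ (A B : Finset α) (x : α), A ⊆ B → x ∉ B →
      f (B ∪ {x}) - f B ≤ f (A ∪ {x}) - f A)
    (hempty : f ∅ = 0) (hcpos : ∀ x, 0 < c x)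
    (k : ℕ) (hk : 1 ≤ k) :
    ∀ n (S : Finset α), S.card = n → k ≤ n →
      ∃ T ⊆ S, T.card = k ∧ f S * ∑ y ∈ T, c y ≤ f T * ∑ y ∈ S, c y := by
  intro n
  induction n using Nat.strong_induction_on with
  | _ n ih =>
    intro S hcard hkn
    rcases eq_or_lt_of_le hkn with h | h
    · exact ⟨S, Finset.Subset.refl S, by omega, le_refl _⟩
    · have h2 : 2 ≤ S.card := by omega
      obtain ⟨x, hx, hxle⟩ := exists_erase f c hsub hempty hcpos S h2
      have hcard' : (S.erase x).card = n - 1 := by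
        rw [Finset.card_erase_of_mem hx, hcard]
      obtain ⟨T, hTsub, hTcard, hTle⟩ :=
        ih (n - 1) (by omega) (S.erase x) hcard' (by omega)
      refine ⟨T, hTsub.trans (Finset.erase_subset x S), hTcard, ?_⟩
      have hTne : T.Nonempty := Finset.card_pos.mp (by omega)
      have hErne : (S.erase x).Nonempty := Finset.card_pos.mp (by omega)
      have cT : 0 < ∑ y ∈ T, c y := Finset.sum_pos (fun y _ => hcpos y) hTne
      have cE : 0 < ∑ y ∈ S.erase x, c y := Finset.sum_pos (fun y _ => hcpos y) hErne
      have cS : 0 < ∑ y ∈ S, c y :=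
        Finset.sum_pos (fun y _ => hcpos y) ⟨x, hx⟩
      nlinarith [hxle, hTle, hnonneg T, hnonneg (S.erase x), hnonneg S,
        mul_le_mul_of_nonneg_right hxle cT.le,
        mul_le_mul_of_nonneg_right hTle cS.le]
end aux

/-- If every set of size exactly `⌈1/ε⌉` has additive cost at least `(1/ε)·c₀`,
then for every `T*` with `|T*| > 1/ε` there is a subset `T ⊆ T*` of size at most
`⌈1/ε⌉` with `f(T)/(c₀' + c(T)) ≥ (1−ε)·f(T*)/(c₀' + c(T*))` for `0 ≤ c₀' ≤ c₀`. -/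
theorem stmt17 {α : Type*} [DecidableEq α] [Fintype α]
    (f : Finset α → ℝ) (c : α → ℝ)
    (hnonneg : ∀ A, 0 ≤ f A)
    (hmono : ∀ A B : Finset α, A ⊆ B → f A ≤ f B)
    (hsub : ∀ (A B : Finset α) (x : α), A ⊆ B → x ∉ B →
      f (B ∪ {x}) - f B ≤ f (A ∪ {x}) - f A)
    (hempty : f ∅ = 0)
    (hcpos : ∀ x, 0 < c x)
    (ε c₀ : ℝ) (hε0 : 0 < ε) (hε1 : ε < 1) (hc₀ : 0 ≤ c₀)
    (hcond : ∀ T : Finset α, T.card = ⌈1 / ε⌉₊ → (1 / ε) * c₀ ≤ ∑ x ∈ T, c x)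
    (Tstar : Finset α) (hTstar : (1 : ℝ) / ε < Tstar.card)
    (c₀' : ℝ) (hc₀'0 : 0 ≤ c₀') (hc₀' : c₀' ≤ c₀) :
    ∃ T ⊆ Tstar, T.card ≤ ⌈1 / ε⌉₊ ∧
      (1 - ε) * (f Tstar / (c₀' + ∑ x ∈ Tstar, c x)) ≤
        f T / (c₀' + ∑ x ∈ T, c x) := by
  set k := ⌈1 / ε⌉₊ with hkdef
  have h1ε : (1 : ℝ) < 1 / ε := (one_lt_div hε0).mpr hε1
  have hk1 : 1 ≤ k := Nat.one_le_iff_ne_zero.mpr (by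
    intro h
    have := Nat.ceil_eq_zero.mp h
    linarith)
  have hkcard : k ≤ Tstar.card := Nat.ceil_le.mpr hTstar.le
  obtain ⟨T, hTsub, hTcard, hTle⟩ :=
    descent f c hnonneg hsub hempty hcpos k hk1 Tstar.card Tstar rfl hkcard
  refine ⟨T, hTsub, le_of_eq hTcard, ?_⟩
  set cT := ∑ y ∈ T, c y
  set cS := ∑ y ∈ Tstar, c y
  have hTne : T.Nonempty := Finset.card_pos.mp (by omega)
  have cTpos : 0 < cT := Finset.sum_pos (fun y _ => hcpos y) hTne
  have cSpos : 0 < cS := Finset.sum_pos (fun y _ => hcpos y)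
    (Finset.card_pos.mp (by omega))
  have hcostT : (1 / ε) * c₀ ≤ cT := hcond T hTcard
  have hc₀'eps : c₀' ≤ ε * cT := by
    have : (1 / ε) * c₀' ≤ cT := le_trans (by nlinarith) hcostT
    calc c₀' = ε * ((1/ε) * c₀') := by field_simp
    _ ≤ ε * cT := by nlinarith
  rw [← mul_div_assoc, div_le_div_iff₀ (by positivity) (by positivity)]
  -- goal : (1 - ε) * (f Tstar) * (c₀' + cT) ≤ f T * (c₀' + cS)  (roughly)
  nlinarith [hTle, hnonneg T, hnonneg Tstar, hc₀'eps, cTpos, cSpos,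
    mul_nonneg (hnonneg Tstar) hc₀'0, mul_nonneg (hnonneg T) hc₀'0,
    mul_le_mul_of_nonneg_left hc₀'eps (hnonneg Tstar)]
end
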